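/- arXiv:2202.00746 — 5 statements merged into one kernel-verified Lean document; each statement's English description precedes it below -/
import Mathlib

section
/- Let A, B be N×N real matrices and D an N×M real matrix, and let 𝓡 be the associated enlarged Kalman matrix. If V is any subspace of ℝᴺ contained in Ker(Dᵀ) and invariant under both Aᵀ and Bᵀ, then V ⊆ Ker(𝓡ᵀ). Consequently Ker(𝓡ᵀ) is the largest subspace contained in Ker(Dᵀ) that is invariant under both Aᵀ and Bᵀ. -/
open Matrix

/-- The product of a word in the matrices `A` and `B`. -/
noncomputable def wordProd {R : Type} [CommRing R] {n : ℕ}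
    (A B : Matrix (Fin n) (Fin n) R) (w : List Bool) : Matrix (Fin n) (Fin n) R :=
  (w.map fun b => if b then A else B).prod

/-- `Ker(𝓡ᵀ)` for the enlarged Kalman matrix `𝓡 = (A^p B^q ⋯ A^r B^s D)_{p,q,…,r,s}`:
the set of `x` with `Dᵀ (Bᵀ)^s (Aᵀ)^r ⋯ (Bᵀ)^q (Aᵀ)^p x = 0` for all exponents. -/
noncomputable def kalmanKer {R : Type} [CommRing R] {N M : ℕ}
    (A B : Matrix (Fin N) (Fin N) R) (D : Matrix (Fin N) (Fin M) R) :
    Submodule R (Fin N → R) :=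
  ⨅ w : List Bool,
    LinearMap.ker (D.transpose.mulVecLin.comp (wordProd A.transpose B.transpose w).mulVecLin)

section

variable {R : Type} [CommRing R] {n : ℕ}

@[simp]
lemma wordProd_nil (A B : Matrix (Fin n) (Fin n) R) : wordProd A B [] = 1 := rfl

lemma wordProd_cons (A B : Matrix (Fin n) (Fin n) R) (b : Bool) (w : List Bool) :
    wordProd A B (b :: w) = (if b then A else B) * wordProd A B w := by
  simp [wordProd]

lemma wordProd_append (A B : Matrix (Fin n) (Fin n) R) (w v : List Bool) :
    wordProd A B (w ++ v) = wordProd A B w * wordProd A B v := by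
  simp [wordProd]

lemma wordProd_mulVec_mem {A B : Matrix (Fin n) (Fin n) R} {V : Submodule R (Fin n → R)}
    (hA : ∀ x ∈ V, A *ᵥ x ∈ V) (hB : ∀ x ∈ V, B *ᵥ x ∈ V) (w : List Bool) {x : Fin n → R}
    (hx : x ∈ V) : wordProd A B w *ᵥ x ∈ V := by
  induction w with
  | nil => simpa using hx
  | cons b w ih =>
    rw [wordProd_cons, ← mulVec_mulVec]
    cases b
    · exact hB _ ih
    · exact hA _ ih

end

section

variable {R : Type} [CommRing R] {N M : ℕ}
  {A B : Matrix (Fin N) (Fin N) R} {D : Matrix (Fin N) (Fin M) R}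

lemma mem_kalmanKer_iff {x : Fin N → R} :
    x ∈ kalmanKer A B D ↔ ∀ w : List Bool, Dᵀ *ᵥ (wordProd Aᵀ Bᵀ w *ᵥ x) = 0 := by
  simp only [kalmanKer, Submodule.mem_iInf, LinearMap.mem_ker, LinearMap.comp_apply,
    mulVecLin_apply]

lemma le_kalmanKer {V : Submodule R (Fin N → R)} (hD : V ≤ LinearMap.ker Dᵀ.mulVecLin)
    (hA : ∀ x ∈ V, Aᵀ *ᵥ x ∈ V) (hB : ∀ x ∈ V, Bᵀ *ᵥ x ∈ V) : V ≤ kalmanKer A B D :=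
  fun _ hx => mem_kalmanKer_iff.2 fun w => hD (wordProd_mulVec_mem hA hB w hx)

lemma kalmanKer_le_ker : kalmanKer A B D ≤ LinearMap.ker Dᵀ.mulVecLin := fun x hx => by
  simpa only [wordProd_nil, one_mulVec, LinearMap.mem_ker, mulVecLin_apply]
    using mem_kalmanKer_iff.1 hx []

lemma wordProd_mulVec_mem_kalmanKer (v : List Bool) {x : Fin N → R}
    (hx : x ∈ kalmanKer A B D) : wordProd Aᵀ Bᵀ v *ᵥ x ∈ kalmanKer A B D :=
  mem_kalmanKer_iff.2 fun w => by
    simpa [wordProd_append, mulVec_mulVec] using mem_kalmanKer_iff.1 hx (w ++ v)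

lemma transpose_mulVec_mem_kalmanKer_left {x : Fin N → R} (hx : x ∈ kalmanKer A B D) :
    Aᵀ *ᵥ x ∈ kalmanKer A B D := by
  simpa [wordProd] using wordProd_mulVec_mem_kalmanKer [true] hx

lemma transpose_mulVec_mem_kalmanKer_right {x : Fin N → R} (hx : x ∈ kalmanKer A B D) :
    Bᵀ *ᵥ x ∈ kalmanKer A B D := by
  simpa [wordProd] using wordProd_mulVec_mem_kalmanKer [false] hx

end

/-- any subspace `V ⊆ Ker(Dᵀ)` invariant under `Aᵀ` and `Bᵀ` satisfies
`V ⊆ Ker(𝓡ᵀ)`; consequently `Ker(𝓡ᵀ)` is the largest subspace contained in `Ker(Dᵀ)`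
that is invariant under both `Aᵀ` and `Bᵀ`. -/
theorem kalmanKer_isGreatest {N M : ℕ}
    (A B : Matrix (Fin N) (Fin N) ℝ) (D : Matrix (Fin N) (Fin M) ℝ) :
    (∀ V : Submodule ℝ (Fin N → ℝ),
      V ≤ LinearMap.ker D.transpose.mulVecLin →
      (∀ x ∈ V, A.transpose.mulVec x ∈ V) →
      (∀ x ∈ V, B.transpose.mulVec x ∈ V) →
      V ≤ kalmanKer A B D) ∧
    IsGreatest {V : Submodule ℝ (Fin N → ℝ) |
        V ≤ LinearMap.ker D.transpose.mulVecLin ∧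
        (∀ x ∈ V, A.transpose.mulVec x ∈ V) ∧
        (∀ x ∈ V, B.transpose.mulVec x ∈ V)}
      (kalmanKer A B D) :=
  ⟨fun _ => le_kalmanKer,
    ⟨⟨kalmanKer_le_ker, fun _ => transpose_mulVec_mem_kalmanKer_left,
        fun _ => transpose_mulVec_mem_kalmanKer_right⟩,
      fun _ hV => le_kalmanKer hV.1 hV.2.1 hV.2.2⟩⟩
end

section
/- Let A be an N×N real matrix and D an N×M real matrix. The Kalman rank condition rank(D, AD, …, A^{N−1}D) ≥ N − d holds if and only if every subspace of ℝᴺ contained in Ker(Dᵀ) and invariant under Aᵀ has dimension at most d. -/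
/-!
The kernel of `(D, AD, …, A^{N−1}D)ᵀ` is the unobservable subspace
`{x | Dᵀ (Aᵀ)ᵏ x = 0 for all k}`: by Cayley–Hamilton every power of `Aᵀ` is a combination of
those below `N`, so the truncation at `N − 1` loses nothing. That subspace is the largest
`Aᵀ`-invariant subspace of `Ker Dᵀ`, and by rank–nullity its dimension is `N − rank`.
-/

open Matrix

/-- The classical Kalman matrix `(D, AD, …, A^{N−1}D)`, an `N × (N·M)` matrix obtained by
horizontal concatenation of `D, AD, …, A^{N-1}D`. -/
noncomputable def kalmanMatrix {N M : ℕ} (A : Matrix (Fin N) (Fin N) ℝ)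
    (D : Matrix (Fin N) (Fin M) ℝ) : Matrix (Fin N) (Fin N × Fin M) ℝ :=
  fun i kj => (A ^ (kj.1 : ℕ) * D) i kj.2

open Polynomial

namespace Matrix

variable {m n R : Type*} [Fintype n] [DecidableEq n] [CommRing R]

theorem pow_mem_span_pow_lt_card (B : Matrix n n R) (k : ℕ) :
    B ^ k ∈ Submodule.span R ((B ^ ·) '' Set.Iio (Fintype.card n)) := by
  rcases isEmpty_or_nonempty n with hn | hn
  · simp [Subsingleton.elim (B ^ k) 0]
  nontriviality R
  have hdeg : (X ^ k %ₘ B.charpoly).natDegree < Fintype.card n := by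
    rw [← B.charpoly_natDegree_eq_dim]
    refine natDegree_modByMonic_lt _ B.charpoly_monic fun h => ?_
    exact Fintype.card_ne_zero (α := n) (by simpa [h] using B.charpoly_natDegree_eq_dim.symm)
  rw [pow_eq_aeval_mod_charpoly, aeval_eq_sum_range' hdeg]
  exact Submodule.sum_mem _ fun i hi => Submodule.smul_mem _ _ <|
    Submodule.subset_span ⟨i, Finset.mem_range.mp hi, rfl⟩

theorem mulVec_pow_mulVec_eq_zero_of_forall_lt_card (C : Matrix m n R) (B : Matrix n n R)
    {x : n → R} (hx : ∀ i < Fintype.card n, C *ᵥ (B ^ i *ᵥ x) = 0) (k : ℕ) :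
    C *ᵥ (B ^ k *ᵥ x) = 0 := by
  suffices ∀ P ∈ Submodule.span R ((B ^ ·) '' Set.Iio (Fintype.card n)), C *ᵥ (P *ᵥ x) = 0 from
    this _ (B.pow_mem_span_pow_lt_card k)
  intro P hP
  induction hP using Submodule.span_induction with
  | mem _ h => obtain ⟨i, hi, rfl⟩ := h; exact hx i hi
  | zero => simp
  | add P Q _ _ hP hQ => rw [add_mulVec, mulVec_add, hP, hQ, add_zero]
  | smul c P _ hP => rw [smul_mulVec, mulVec_smul, hP, smul_zero]

end Matrix

theorem Matrix.rank_add_finrank_ker_transpose {m n K : Type*} [Fintype m] [Fintype n] [Field K]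
    (B : Matrix m n K) :
    B.rank + Module.finrank K (LinearMap.ker Bᵀ.mulVecLin) = Fintype.card m := by
  rw [← B.rank_transpose, Matrix.rank, LinearMap.finrank_range_add_finrank_ker,
    Module.finrank_fintype_fun_eq_card]

section Kalman

variable {N M : ℕ} (A : Matrix (Fin N) (Fin N) ℝ) (D : Matrix (Fin N) (Fin M) ℝ)

theorem kalmanMatrix_transpose_mulVec_apply (x : Fin N → ℝ) (k : Fin N) (j : Fin M) :
    ((kalmanMatrix A D)ᵀ *ᵥ x) (k, j) = (Dᵀ *ᵥ (Aᵀ ^ (k : ℕ) *ᵥ x)) j := by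
  rw [mulVec_mulVec, ← transpose_pow, ← transpose_mul]
  rfl

theorem mem_ker_kalmanMatrix_transpose_iff {x : Fin N → ℝ} :
    x ∈ LinearMap.ker (kalmanMatrix A D)ᵀ.mulVecLin ↔ ∀ k : ℕ, Dᵀ *ᵥ (Aᵀ ^ k *ᵥ x) = 0 := by
  rw [LinearMap.mem_ker, mulVecLin_apply]
  refine ⟨fun hx => Dᵀ.mulVec_pow_mulVec_eq_zero_of_forall_lt_card Aᵀ fun i hi => ?_,
    fun hx => funext fun kj => ?_⟩
  · funext j
    have := congrFun hx (⟨i, by simpa using hi⟩, j)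
    rwa [kalmanMatrix_transpose_mulVec_apply] at this
  · rw [kalmanMatrix_transpose_mulVec_apply, hx]
    rfl

theorem isGreatest_ker_kalmanMatrix_transpose :
    IsGreatest {V : Submodule ℝ (Fin N → ℝ) |
        V ≤ LinearMap.ker Dᵀ.mulVecLin ∧ ∀ x ∈ V, Aᵀ *ᵥ x ∈ V}
      (LinearMap.ker (kalmanMatrix A D)ᵀ.mulVecLin) := by
  refine ⟨⟨fun x hx => ?_, fun x hx => ?_⟩, fun V ⟨hVD, hVA⟩ x hx => ?_⟩
  · have := (mem_ker_kalmanMatrix_transpose_iff A D).mp hx 0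
    rwa [pow_zero, one_mulVec] at this
  · rw [mem_ker_kalmanMatrix_transpose_iff] at hx ⊢
    intro k
    rw [mulVec_mulVec x (Aᵀ ^ k), ← pow_succ]
    exact hx (k + 1)
  · rw [mem_ker_kalmanMatrix_transpose_iff]
    intro k
    have hpow : Aᵀ ^ k *ᵥ x ∈ V := by
      induction k with
      | zero => simpa using hx
      | succ k ih => rw [pow_succ', ← mulVec_mulVec]; exact hVA _ ih
    exact hVD hpow

end Kalman

/-- the Kalman rank condition `rank (D, AD, …, A^{N−1}D) ≥ N − d` holds iff
every subspace of `ℝᴺ` contained in `Ker(Dᵀ)` and invariant under `Aᵀ` has dimension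
at most `d`. -/
theorem kalman_classical_rank_ge_iff {N M : ℕ} (d : ℕ)
    (A : Matrix (Fin N) (Fin N) ℝ) (D : Matrix (Fin N) (Fin M) ℝ) :
    N - d ≤ (kalmanMatrix A D).rank ↔
      ∀ V : Submodule ℝ (Fin N → ℝ),
        V ≤ LinearMap.ker D.transpose.mulVecLin →
        (∀ x ∈ V, A.transpose.mulVec x ∈ V) →
        Module.finrank ℝ V ≤ d := by
  obtain ⟨⟨hSD, hSA⟩, hS_max⟩ := isGreatest_ker_kalmanMatrix_transpose A D
  have hrank := (kalmanMatrix A D).rank_add_finrank_ker_transpose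
  rw [Fintype.card_fin] at hrank
  constructor
  · intro h V hVD hVA
    have := Submodule.finrank_mono (hS_max ⟨hVD, hVA⟩)
    omega
  · intro h
    have := h _ hSD hSA
    omega
end

section
/- Let A, B be N×N real matrices, D an N×M real matrix, and 𝓡 the enlarged Kalman matrix. If Ker(𝓡ᵀ) = {0}, then for any joint eigenspace V = {x : Aᵀx = αx, Bᵀx = βx} (α, β scalars), we have Ker(Dᵀ) ∩ V = {0}, and hence dim V ≤ rank(D). -/
open Matrix

/-! A common eigenvector of `Aᵀ` and `Bᵀ` is an eigenvector of every word in `Aᵀ, Bᵀ`, so if it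
also lies in `Ker Dᵀ` it is killed by every block `Dᵀ (Bᵀ)^s ⋯ (Aᵀ)^p` of `𝓡ᵀ`. Hence
`Ker Dᵀ ∩ V ⊆ Ker 𝓡ᵀ = 0`, i.e. `Dᵀ` is injective on `V`, and `dim V ≤ rank Dᵀ = rank D`. -/

lemma LinearMap.finrank_le_finrank_range_of_disjoint_ker {R M N : Type*} [Ring R]
    [StrongRankCondition R] [AddCommGroup M] [Module R M] [Module.Finite R M] [AddCommGroup N]
    [Module R N] (f : M →ₗ[R] N) {V : Submodule R M} (hV : Disjoint V (LinearMap.ker f)) :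
    Module.finrank R V ≤ Module.finrank R (LinearMap.range f) := by
  rw [← LinearMap.finrank_range_of_inj (LinearMap.injective_domRestrict_iff.mpr hV)]
  exact Submodule.finrank_mono (f.range_domRestrict_le_range V)

namespace Matrix

variable {R : Type} [CommRing R] {n : ℕ}

lemma mem_ker_mulVecLin_sub_smul_iff {m : Type*} [Fintype m] {A : Matrix m m R} {α : R}
    {x : m → R} :
    x ∈ LinearMap.ker (A.mulVecLin - α • LinearMap.id) ↔ A *ᵥ x = α • x := by
  simp [sub_eq_zero]

lemma wordProd_mulVec_of_mulVec_eq_smul {A B : Matrix (Fin n) (Fin n) R} {α β : R}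
    {x : Fin n → R} (hA : A *ᵥ x = α • x) (hB : B *ᵥ x = β • x) (w : List Bool) :
    wordProd A B w *ᵥ x = (w.map fun b => if b then α else β).prod • x := by
  induction w with
  | nil => simp [wordProd]
  | cons b w ih =>
    have hw : wordProd A B (b :: w) = (if b then A else B) * wordProd A B w := by
      simp [wordProd]
    rw [hw, ← mulVec_mulVec, ih, mulVec_smul]
    cases b <;> simp [hA, hB, smul_smul, mul_comm]

lemma mem_kalmanKer_of_mulVec_eq_smul {M : ℕ} {A B : Matrix (Fin n) (Fin n) R}
    {D : Matrix (Fin n) (Fin M) R} {α β : R} {x : Fin n → R} (hD : Dᵀ *ᵥ x = 0)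
    (hA : Aᵀ *ᵥ x = α • x) (hB : Bᵀ *ᵥ x = β • x) : x ∈ kalmanKer A B D := by
  refine Submodule.mem_iInf _ |>.mpr fun w => ?_
  simp only [LinearMap.mem_ker, LinearMap.comp_apply, mulVecLin_apply,
    wordProd_mulVec_of_mulVec_eq_smul hA hB, mulVec_smul, hD, smul_zero]

end Matrix

/-- if `Ker(𝓡ᵀ) = {0}`, then for any joint eigenspace
`V = {x : Aᵀx = αx, Bᵀx = βx}` one has `Ker(Dᵀ) ∩ V = {0}` and `dim V ≤ rank D`. -/
theorem kerD_inter_eigenspace_eq_bot {N M : ℕ}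
    (A B : Matrix (Fin N) (Fin N) ℝ) (D : Matrix (Fin N) (Fin M) ℝ)
    (h : kalmanKer A B D = ⊥) (α β : ℝ) :
    LinearMap.ker D.transpose.mulVecLin ⊓
        (LinearMap.ker (A.transpose.mulVecLin - α • LinearMap.id) ⊓
          LinearMap.ker (B.transpose.mulVecLin - β • LinearMap.id)) = ⊥ ∧
      Module.finrank ℝ
        (LinearMap.ker (A.transpose.mulVecLin - α • LinearMap.id) ⊓
          LinearMap.ker (B.transpose.mulVecLin - β • LinearMap.id) :
          Submodule ℝ (Fin N → ℝ)) ≤ D.rank := by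
  have hDV : LinearMap.ker D.transpose.mulVecLin ⊓
      (LinearMap.ker (A.transpose.mulVecLin - α • LinearMap.id) ⊓
        LinearMap.ker (B.transpose.mulVecLin - β • LinearMap.id)) = ⊥ := by
    refine eq_bot_iff.mpr fun x ⟨hD, hA, hB⟩ => h ▸ ?_
    exact mem_kalmanKer_of_mulVec_eq_smul hD (mem_ker_mulVecLin_sub_smul_iff.mp hA)
      (mem_ker_mulVecLin_sub_smul_iff.mp hB)
  refine ⟨hDV, ?_⟩
  rw [← rank_transpose D]
  exact D.transpose.mulVecLin.finrank_le_finrank_range_of_disjoint_ker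
    (disjoint_iff.mpr hDV).symm
end

section
/- Let C_p be a full row-rank (N−p)×N real matrix and A an N×N real matrix with A·Ker(C_p) ⊆ Ker(C_p). If A is similar to a symmetric matrix (i.e., A is diagonalizable over ℝ with real eigenvalues), then the reduced matrix Ā_p = C_pAC_pᵀ(C_pC_pᵀ)^{-1} is also similar to a symmetric matrix. -/
open Matrix

/-- A real square matrix is similar to a symmetric matrix. -/
def SimilarToSymm {n : ℕ} (A : Matrix (Fin n) (Fin n) ℝ) : Prop :=
  ∃ P S : Matrix (Fin n) (Fin n) ℝ, IsUnit P.det ∧ S.transpose = S ∧ A = P * S * P⁻¹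

/-! The invariance of `ker C` gives `C * A = Ā * C` for `Ā = C A Cᵀ (C Cᵀ)⁻¹`, so writing
`A = P * S * P⁻¹` and `D = C * P` (of full row rank) we get `Ā * D = D * S`. Hence
`Ā = (D S Dᵀ) K⁻¹` with `K = D Dᵀ` positive definite, and conjugating by `√K` turns `Ā` into
the symmetric matrix `√K⁻¹ (D S Dᵀ) √K⁻¹`. -/

namespace Matrix

variable {m n : Type*} [Fintype m] [Fintype n]

theorem vecMul_injective_of_rank_eq_card {K : Type*} [Field K] {D : Matrix m n K}
    (hD : D.rank = Fintype.card m) : Function.Injective D.vecMul := by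
  rw [vecMul_injective_iff, linearIndependent_iff_card_eq_finrank_span, ← hD,
    rank_eq_finrank_span_row, Set.finrank]

theorem posDef_mul_transpose_of_rank_eq_card [DecidableEq m] {D : Matrix m n ℝ}
    (hD : D.rank = Fintype.card m) : (D * Dᵀ).PosDef := by
  simpa using PosDef.mul_conjTranspose_self D (vecMul_injective_of_rank_eq_card hD)

theorem mul_eq_reduced_mul_of_mapsTo_ker {K : Type*} [Field K] [DecidableEq m] [DecidableEq n]
    {C : Matrix m n K} (hC : IsUnit (C * Cᵀ).det) {A : Matrix n n K}
    (hA : ∀ x ∈ LinearMap.ker C.mulVecLin, A *ᵥ x ∈ LinearMap.ker C.mulVecLin) :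
    C * A = C * A * Cᵀ * (C * Cᵀ)⁻¹ * C := by
  -- `Q` is the orthogonal projector onto `ker C`.
  set Q := 1 - Cᵀ * (C * Cᵀ)⁻¹ * C
  have hCQ : C * Q = 0 := by
    rw [Matrix.mul_sub, Matrix.mul_one, ← Matrix.mul_assoc, ← Matrix.mul_assoc,
      mul_nonsing_inv _ hC, Matrix.one_mul, sub_self]
  have hCAQ : C * A * Q = 0 := by
    refine ext_iff_mulVec.mpr fun v => ?_
    have hQv : Q *ᵥ v ∈ LinearMap.ker C.mulVecLin := by
      simp [mulVec_mulVec, hCQ]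
    simpa [mulVec_mulVec, Matrix.mul_assoc] using hA _ hQv
  rw [Matrix.mul_sub, Matrix.mul_one, sub_eq_zero] at hCAQ
  simpa only [Matrix.mul_assoc] using hCAQ

end Matrix

open scoped MatrixOrder in
theorem similarToSymm_mul_inv_of_posDef {k : ℕ} {M K : Matrix (Fin k) (Fin k) ℝ}
    (hM : Mᵀ = M) (hK : K.PosDef) : SimilarToSymm (M * K⁻¹) := by
  set R := CFC.sqrt K
  have hR : Rᵀ = R := by
    simpa [IsHermitian] using (CFC.sqrt_nonneg K).posSemidef.isHermitian
  have hRR : R * R = K := CFC.sqrt_mul_sqrt_self K hK.posSemidef.nonneg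
  have hRdet : IsUnit R.det := by
    rw [← isUnit_iff_isUnit_det, CFC.isUnit_sqrt_iff K hK.posSemidef.nonneg]
    exact hK.isUnit
  refine ⟨R, R⁻¹ * M * R⁻¹, hRdet, ?_, ?_⟩
  · simp [transpose_mul, transpose_nonsing_inv, hR, hM, mul_assoc]
  · rw [← hRR, Matrix.mul_inv_rev, ← mul_assoc, ← mul_assoc,
      mul_nonsing_inv_cancel_left _ _ hRdet]

theorem similarToSymm_of_mul_eq_mul_symm {k : ℕ} {n : Type*} [Fintype n]
    {B : Matrix (Fin k) (Fin k) ℝ} {D : Matrix (Fin k) n ℝ} {S : Matrix n n ℝ}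
    (hS : Sᵀ = S) (hD : D.rank = k) (hBD : B * D = D * S) : SimilarToSymm B := by
  have hK := posDef_mul_transpose_of_rank_eq_card (D := D) (by simpa using hD)
  have hB : B = D * S * Dᵀ * (D * Dᵀ)⁻¹ := by
    rw [← hBD, Matrix.mul_assoc B, mul_nonsing_inv_cancel_right _ _
      ((isUnit_iff_isUnit_det _).mp hK.isUnit)]
  rw [hB]
  exact similarToSymm_mul_inv_of_posDef (by simp [transpose_mul, hS, Matrix.mul_assoc]) hK

theorem reduced_similar_to_symm_general {N p : ℕ}
    (C : Matrix (Fin (N - p)) (Fin N) ℝ) (hrank : C.rank = N - p)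
    (A : Matrix (Fin N) (Fin N) ℝ)
    (hinv : ∀ x ∈ LinearMap.ker C.mulVecLin, A.mulVec x ∈ LinearMap.ker C.mulVecLin)
    (hA : SimilarToSymm A) :
    SimilarToSymm (C * A * C.transpose * (C * C.transpose)⁻¹) := by
  obtain ⟨P, S, hP, hS, hAPS⟩ := hA
  have hCC : IsUnit (C * Cᵀ).det := (isUnit_iff_isUnit_det _).mp
    (posDef_mul_transpose_of_rank_eq_card (D := C) (by simpa using hrank)).isUnit
  have hAP : A * P = P * S := by rw [hAPS, nonsing_inv_mul_cancel_right _ _ hP]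
  refine similarToSymm_of_mul_eq_mul_symm hS (D := C * P) ?_ ?_
  · rw [rank_mul_eq_left_of_isUnit_det _ _ hP, hrank]
  · rw [← Matrix.mul_assoc, ← mul_eq_reduced_mul_of_mapsTo_ker hCC hinv, Matrix.mul_assoc, hAP,
      Matrix.mul_assoc]

/-- if `A·Ker(C_p) ⊆ Ker(C_p)` and `A` is similar to a symmetric matrix,
then the reduced matrix `Ā_p = C_pAC_pᵀ(C_pC_pᵀ)⁻¹` is also similar to a symmetric
matrix. -/
theorem reduced_similar_to_symm {N p : ℕ} (hp : p ≤ N)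
    (C : Matrix (Fin (N - p)) (Fin N) ℝ) (hrank : C.rank = N - p)
    (A : Matrix (Fin N) (Fin N) ℝ)
    (hinv : ∀ x ∈ LinearMap.ker C.mulVecLin, A.mulVec x ∈ LinearMap.ker C.mulVecLin)
    (hA : SimilarToSymm A) :
    SimilarToSymm (C * A * C.transpose * (C * C.transpose)⁻¹) :=
  reduced_similar_to_symm_general C hrank A hinv hA
end

section
/- Let A be an N×N real matrix whose restriction-compatible invariant subspace is Ker(C_p) for a full row-rank (N−p)×N matrix C_p (i.e., A·Ker(C_p) ⊆ Ker(C_p)), with reduced matrix Ā_p. Suppose {x_l^{(k)}} (1 ≤ k ≤ d, 1 ≤ l ≤ r_k) is a complete system of Jordan chains for A (a basis of ℝᴺ with A x_l^{(k)} = λ_k x_l^{(k)} + x_{l+1}^{(k)}, x_{r_k+1}^{(k)} = 0), ordered so that for some integers d̄ ≤ d and r̄_k ≤ r_k the vectors {x_l^{(k)} : 1 ≤ k ≤ d̄, r̄_k+1 ≤ l ≤ r_k} span Ker(C_p). Then the nonzero projected vectors x̄_l^{(k)} = C_p x_l^{(k)} form a complete system of Jordan chains (a basis of ℝ^{N−p}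 of root vectors) of Ā_p. -/
open Matrix

/-!
Since `C` has full row rank it maps `ℝᴺ` onto `ℝ^{N-p}`, and it kills exactly the span of the
tail vectors of the chains. Splitting the basis `{x k l}` into heads (`l < rbar k`) and tails,
`C` therefore maps the span of the heads isomorphically onto `ℝ^{N-p}`, so the projected heads
form a basis. The chain relations pass to `Abar` through the intertwining `C * A = Abar * C`.
-/

section KernelSpannedBySubfamily

variable {R M N ι κ : Type*} [Ring R] [AddCommGroup M] [Module R M] [AddCommGroup N] [Module R N]
  {b : ι → M} {f : M →ₗ[R] N} {e : κ → ι}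

theorem LinearIndependent.map_comp_of_ker_eq_span_compl (hb : LinearIndependent R b)
    (he : Function.Injective e)
    (hker : LinearMap.ker f = Submodule.span R (b '' (Set.range e)ᶜ)) :
    LinearIndependent R (f ∘ b ∘ e) := by
  refine (hb.comp e he).map ?_
  rw [Set.range_comp, hker]
  exact hb.disjoint_span_image disjoint_compl_right

theorem span_range_map_comp_of_ker_eq_span_compl (hb : Submodule.span R (Set.range b) = ⊤)
    (hker : LinearMap.ker f = Submodule.span R (b '' (Set.range e)ᶜ)) :
    Submodule.span R (Set.range (f ∘ b ∘ e)) = LinearMap.range f := by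
  have hsplit : Set.range b = b '' Set.range e ∪ b '' (Set.range e)ᶜ := by
    rw [← Set.image_union, Set.union_compl_self, Set.image_univ]
  rw [← Submodule.map_top, ← hb, hsplit, Submodule.span_union, ← hker, Submodule.map_sup,
    LinearMap.le_ker_iff_map.mp le_rfl, sup_bot_eq, ← Submodule.span_image, Set.range_comp,
    Set.range_comp]

end KernelSpannedBySubfamily

theorem Matrix.range_mulVecLin_eq_top_of_rank_eq {K m n : Type*} [Field K] [Fintype m]
    [Fintype n] [DecidableEq n] {C : Matrix m n K} (h : C.rank = Fintype.card m) :
    LinearMap.range C.mulVecLin = ⊤ :=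
  Submodule.eq_top_of_finrank_eq (by simpa [Matrix.rank] using h)

theorem Matrix.mulVec_mulVec_eq_smul_add_of_mul_eq_mul {R m n : Type*} [CommSemiring R]
    [Fintype m] [Fintype n] {C : Matrix m n R} {A : Matrix n n R} {Abar : Matrix m m R}
    (hcomp : C * A = Abar * C) {c : R} {v w : n → R} (h : A *ᵥ v = c • v + w) :
    Abar *ᵥ (C *ᵥ v) = c • C *ᵥ v + C *ᵥ w := by
  rw [mulVec_mulVec, ← hcomp, ← mulVec_mulVec, h, mulVec_add, mulVec_smul]

section ChainHeads

variable {α : Type*} {d : ℕ} {r rbar : ℕ → ℕ}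

def Fin.sigmaCastLE (hle : ∀ k, rbar k ≤ r k) :
    (Σ k : Fin d, Fin (rbar k)) → Σ k : Fin d, Fin (r k) :=
  Sigma.map id fun k => Fin.castLE (hle k)

theorem Fin.sigmaCastLE_injective (hle : ∀ k, rbar k ≤ r k) :
    Function.Injective (Fin.sigmaCastLE (d := d) hle) :=
  Function.injective_id.sigma_map fun _ => Fin.castLE_injective _

theorem Fin.mem_range_sigmaCastLE_iff (hle : ∀ k, rbar k ≤ r k) (kl : Σ k : Fin d, Fin (r k)) :
    kl ∈ Set.range (Fin.sigmaCastLE hle) ↔ (kl.2 : ℕ) < rbar kl.1 := by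
  constructor
  · rintro ⟨⟨k, l⟩, rfl⟩
    exact l.2
  · intro h
    exact ⟨⟨kl.1, ⟨kl.2, h⟩⟩, rfl⟩

theorem Fin.image_compl_range_sigmaCastLE (x : ℕ → ℕ → α) (hle : ∀ k, rbar k ≤ r k) :
    (fun kl : Σ k : Fin d, Fin (r k) => x kl.1 kl.2) ''
        (Set.range (Fin.sigmaCastLE hle))ᶜ =
      {v | ∃ k < d, ∃ l, rbar k ≤ l ∧ l < r k ∧ v = x k l} := by
  ext v
  simp only [Set.mem_image, Set.mem_compl_iff, Fin.mem_range_sigmaCastLE_iff, not_lt,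
    Set.mem_ofPred_eq]
  constructor
  · rintro ⟨⟨k, l⟩, hl, rfl⟩
    exact ⟨k, k.2, l, hl, l.2, rfl⟩
  · rintro ⟨k, hk, l, hl, hlr, rfl⟩
    exact ⟨⟨⟨k, hk⟩, ⟨l, hlr⟩⟩, hl, rfl⟩

end ChainHeads

theorem projected_root_system_general {N p : ℕ}
    (C : Matrix (Fin (N - p)) (Fin N) ℝ) (hrank : C.rank = N - p)
    (A : Matrix (Fin N) (Fin N) ℝ)
    (Abar : Matrix (Fin (N - p)) (Fin (N - p)) ℝ) (hcomp : C * A = Abar * C)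
    (d : ℕ) (r rbar : ℕ → ℕ) (lam : ℕ → ℝ) (x : ℕ → ℕ → (Fin N → ℝ))
    (hchain : ∀ k < d, ∀ l < r k, A.mulVec (x k l) = lam k • x k l + x k (l + 1))
    (hli : LinearIndependent ℝ
      (fun kl : Σ k : Fin d, Fin (r k) => x (kl.1 : ℕ) (kl.2 : ℕ)))
    (hspan : Submodule.span ℝ
      (Set.range fun kl : Σ k : Fin d, Fin (r k) => x (kl.1 : ℕ) (kl.2 : ℕ)) = ⊤)
    (hle : ∀ k, rbar k ≤ r k)
    (hker : LinearMap.ker C.mulVecLin =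
      Submodule.span ℝ {v | ∃ k < d, ∃ l, rbar k ≤ l ∧ l < r k ∧ v = x k l}) :
    LinearIndependent ℝ
        (fun kl : Σ k : Fin d, Fin (rbar k) => C.mulVec (x (kl.1 : ℕ) (kl.2 : ℕ))) ∧
      Submodule.span ℝ
        (Set.range fun kl : Σ k : Fin d, Fin (rbar k) =>
          C.mulVec (x (kl.1 : ℕ) (kl.2 : ℕ))) = ⊤ ∧
      ∀ k < d, ∀ l < rbar k,
        Abar.mulVec (C.mulVec (x k l)) =
          lam k • C.mulVec (x k l) + C.mulVec (x k (l + 1)) := by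
  have hkerC : LinearMap.ker C.mulVecLin = Submodule.span ℝ
      ((fun kl : Σ k : Fin d, Fin (r k) => x kl.1 kl.2) ''
        (Set.range (Fin.sigmaCastLE hle))ᶜ) := by
    rw [hker, Fin.image_compl_range_sigmaCastLE]
  refine ⟨?_, ?_, ?_⟩
  · exact (hli.map_comp_of_ker_eq_span_compl (Fin.sigmaCastLE_injective hle) hkerC :)
  · have hsurj := Matrix.range_mulVecLin_eq_top_of_rank_eq (C := C) (by simpa using hrank)
    exact (span_range_map_comp_of_ker_eq_span_compl hspan hkerC).trans hsurj
  · intro k hk l hl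
    exact Matrix.mulVec_mulVec_eq_smul_add_of_mul_eq_mul hcomp
      (hchain k hk l (hl.trans_le (hle k)))

/-- let `C_p` be a full row-rank `(N−p) × N` matrix, `A·Ker(C_p) ⊆ Ker(C_p)`
with reduced matrix `Ā_p` (`C_pA = Ā_pC_p`). Let `{x k l : k < d, l < r k}` be a complete
system of Jordan chains of `A` (a basis of `ℝᴺ` with `A x_l = λ_k x_l + x_{l+1}`,
`x (r k) = 0`), ordered so that for some `r̄_k ≤ r_k` the tail vectors
`{x k l : r̄_k ≤ l < r_k}` span `Ker(C_p)`. Then the projected vectors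
`x̄ k l = C_p (x k l)` for `l < r̄_k` form a complete system of Jordan chains of `Ā_p`
(a basis of `ℝ^{N−p}` of root vectors). -/
theorem projected_root_system {N p : ℕ}
    (C : Matrix (Fin (N - p)) (Fin N) ℝ) (hrank : C.rank = N - p)
    (A : Matrix (Fin N) (Fin N) ℝ)
    (hinv : ∀ x ∈ LinearMap.ker C.mulVecLin, A.mulVec x ∈ LinearMap.ker C.mulVecLin)
    (Abar : Matrix (Fin (N - p)) (Fin (N - p)) ℝ) (hcomp : C * A = Abar * C)
    (d : ℕ) (r rbar : ℕ → ℕ) (lam : ℕ → ℝ) (x : ℕ → ℕ → (Fin N → ℝ))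
    (hchain : ∀ k < d, ∀ l < r k, A.mulVec (x k l) = lam k • x k l + x k (l + 1))
    (hend : ∀ k < d, x k (r k) = 0)
    (hli : LinearIndependent ℝ
      (fun kl : Σ k : Fin d, Fin (r k) => x (kl.1 : ℕ) (kl.2 : ℕ)))
    (hspan : Submodule.span ℝ
      (Set.range fun kl : Σ k : Fin d, Fin (r k) => x (kl.1 : ℕ) (kl.2 : ℕ)) = ⊤)
    (hle : ∀ k, rbar k ≤ r k)
    (hker : LinearMap.ker C.mulVecLin =
      Submodule.span ℝ {v | ∃ k < d, ∃ l, rbar k ≤ l ∧ l < r k ∧ v = x k l}) :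
    LinearIndependent ℝ
        (fun kl : Σ k : Fin d, Fin (rbar k) => C.mulVec (x (kl.1 : ℕ) (kl.2 : ℕ))) ∧
      Submodule.span ℝ
        (Set.range fun kl : Σ k : Fin d, Fin (rbar k) =>
          C.mulVec (x (kl.1 : ℕ) (kl.2 : ℕ))) = ⊤ ∧
      ∀ k < d, ∀ l < rbar k,
        Abar.mulVec (C.mulVec (x k l)) =
          lam k • C.mulVec (x k l) + C.mulVec (x k (l + 1)) :=
  projected_root_system_general C hrank A Abar hcomp d r rbar lam x hchain hli hspan hle hker
end
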